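/- arXiv:2204.03303 — 3 statements merged into one kernel-verified Lean document; each statement's English description precedes it below -/
import Mathlib

section
/- Let $f = \chi_{[0,L]}$ with $0 < L < 2\pi$, with Fourier coefficients $f_l = (e^{ilL}-1)/(2\pi i l)$ for $l \neq 0$ and $f_0 = L/(2\pi)$. Then $\lim_{N\to\infty}\frac{1}{\log N}\sum_{l=-\infty}^{\infty}\min(|l|,N)\,f_l f_{-l} = \frac{1}{\pi^2}$. -/
open Real Filter Finset

namespace CueAux

noncomputable def g (L : ℝ) (N : ℕ) (l : ℤ) : ℝ :=
  ((min |l| (N : ℤ) : ℤ) : ℝ) * (1 - Real.cos (l * L)) / (2 * π ^ 2 * (l : ℝ) ^ 2)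

lemma g_zero (L : ℝ) (N : ℕ) : g L N 0 = 0 := by simp [g]

lemma g_neg (L : ℝ) (N : ℕ) (l : ℤ) : g L N (-l) = g L N l := by
  unfold g
  push_cast
  rw [abs_neg, neg_mul, Real.cos_neg]
  norm_num

lemma g_nonneg (L : ℝ) (N : ℕ) (l : ℤ) : 0 ≤ g L N l := by
  unfold g
  have h1 : (0:ℤ) ≤ min |l| (N : ℤ) := le_min (abs_nonneg l) (Int.natCast_nonneg N)
  have h2 : Real.cos (l * L) ≤ 1 := Real.cos_le_one _
  have h3 : (0:ℝ) ≤ ((min |l| (N : ℤ) : ℤ) : ℝ) := by exact_mod_cast h1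
  apply div_nonneg
  · exact mul_nonneg h3 (by linarith)
  · positivity

lemma g_le (L : ℝ) (N : ℕ) (l : ℤ) :
    g L N l ≤ ((N : ℝ) / π ^ 2) * (1 / (l : ℝ) ^ 2) := by
  rcases eq_or_ne l 0 with rfl | hl
  · simp [g]
  have hlR : ((l : ℝ)) ≠ 0 := Int.cast_ne_zero.mpr hl
  have hup : ((min |l| (N : ℤ) : ℤ) : ℝ) * (1 - Real.cos (l * L)) ≤ (N : ℝ) * 2 := by
    have h1 : ((min |l| (N : ℤ) : ℤ) : ℝ) ≤ (N : ℝ) := by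
      exact_mod_cast min_le_right |l| (N : ℤ)
    have h1' : (0:ℝ) ≤ ((min |l| (N : ℤ) : ℤ) : ℝ) := by
      exact_mod_cast le_min (abs_nonneg l) (Int.natCast_nonneg N)
    have h2 : 1 - Real.cos (l * L) ≤ 2 := by
      nlinarith [Real.neg_one_le_cos ((l : ℝ) * L)]
    have h2' : 0 ≤ 1 - Real.cos (l * L) := by nlinarith [Real.cos_le_one ((l : ℝ) * L)]
    exact mul_le_mul h1 h2 h2' (Nat.cast_nonneg N)
  have hden : (0:ℝ) < 2 * π ^ 2 * (l : ℝ) ^ 2 := by positivity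
  calc g L N l ≤ ((N : ℝ) * 2) / (2 * π ^ 2 * (l : ℝ) ^ 2) := by
        unfold g
        gcongr
    _ = ((N : ℝ) / π ^ 2) * (1 / (l : ℝ) ^ 2) := by
        field_simp

lemma summable_g (L : ℝ) (N : ℕ) : Summable (g L N) := by
  apply Summable.of_nonneg_of_le (g_nonneg L N) (g_le L N)
  exact (Summable.mul_left _ (summable_one_div_int_pow.mpr one_lt_two))


section Bounds

noncomputable def M (L : ℝ) : ℝ := 2 / ‖Complex.exp (Complex.I * L) - 1‖

lemma zeta_ne_one {L : ℝ} (hL0 : 0 < L) (hL1 : L < 2 * π) :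
    Complex.exp (Complex.I * L) ≠ 1 := by
  intro h
  rw [Complex.exp_eq_one_iff] at h
  obtain ⟨n, hn⟩ := h
  have hI : (Complex.I : ℂ) ≠ 0 := Complex.I_ne_zero
  have hL : (L : ℂ) = n * (2 * π) := by
    apply mul_left_cancel₀ hI
    rw [hn]; ring
  have hLr : L = n * (2 * π) := by exact_mod_cast hL
  have hπ : 0 < π := Real.pi_pos
  rcases le_or_gt (n : ℝ) 0 with h0 | h0
  · have : (n:ℝ) * (2 * π) ≤ 0 := mul_nonpos_of_nonpos_of_nonneg h0 (by positivity)
    linarith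
  · have hn1 : (0:ℤ) < n := by exact_mod_cast h0
    have h1 : (1:ℝ) ≤ (n:ℝ) := by exact_mod_cast hn1
    have : 2 * π ≤ (n:ℝ) * (2 * π) := le_mul_of_one_le_left (by positivity) h1
    linarith

lemma M_pos {L : ℝ} (hL0 : 0 < L) (hL1 : L < 2 * π) : 0 < M L := by
  have h : Complex.exp (Complex.I * L) - 1 ≠ 0 := sub_ne_zero.mpr (zeta_ne_one hL0 hL1)
  exact div_pos two_pos (norm_pos_iff.mpr h)

lemma S_bound {L : ℝ} (hL0 : 0 < L) (hL1 : L < 2 * π) (n : ℕ) :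
    |∑ i ∈ range n, Real.cos ((i + 1) * L)| ≤ M L := by
  have hζ := zeta_ne_one hL0 hL1
  set ζ := Complex.exp (Complex.I * L) with hζdef
  have habs : ‖ζ‖ = 1 := by
    rw [hζdef, Complex.norm_exp]
    simp
  have hterm : ∀ i : ℕ, Real.cos ((i + 1) * L) = (ζ ^ (i + 1)).re := by
    intro i
    rw [hζdef, ← Complex.exp_nat_mul]
    rw [show ((i + 1 : ℕ) : ℂ) * (Complex.I * L) = (((i : ℝ) + 1) * L : ℝ) * Complex.I by
      push_cast; ring]
    rw [Complex.exp_ofReal_mul_I_re]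
  have hsum : ∑ i ∈ range n, Real.cos ((i + 1) * L) = (∑ i ∈ range n, ζ ^ (i + 1)).re := by
    rw [Complex.re_sum]
    exact Finset.sum_congr rfl fun i _ => hterm i
  rw [hsum]
  refine (Complex.abs_re_le_norm _).trans ?_
  have hgeom : ∑ i ∈ range n, ζ ^ (i + 1) = ζ * ((ζ ^ n - 1) / (ζ - 1)) := by
    rw [← geom_sum_eq hζ, Finset.mul_sum]
    exact Finset.sum_congr rfl fun i _ => pow_succ' ζ i
  rw [hgeom, norm_mul, habs, one_mul, norm_div]
  unfold M
  gcongr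
  calc ‖ζ ^ n - 1‖ ≤ ‖ζ ^ n‖ + 1 := by
        simpa using norm_sub_le (ζ ^ n) 1
    _ ≤ 2 := by rw [norm_pow, habs, one_pow]; norm_num

end Bounds

section CBound

lemma C_bound {L : ℝ} (hL0 : 0 < L) (hL1 : L < 2 * π) (n : ℕ) :
    |∑ i ∈ range n, Real.cos ((i + 1) * L) / (i + 1)| ≤ 2 * M L := by
  have hM := M_pos hL0 hL1
  rcases Nat.eq_zero_or_pos n with rfl | hn
  · simp; linarith
  have hrw : ∀ i : ℕ, Real.cos ((i + 1) * L) / (i + 1)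
      = (fun j : ℕ => (1 : ℝ) / (j + 1)) i • (fun j : ℕ => Real.cos ((j + 1) * L)) i := by
    intro i; simp [smul_eq_mul]; ring
  rw [Finset.sum_congr rfl fun i _ => hrw i]
  rw [Finset.sum_range_by_parts]
  set f : ℕ → ℝ := fun j => (1 : ℝ) / (j + 1) with hf
  set S : ℕ → ℝ := fun m => ∑ i ∈ range m, Real.cos ((i + 1) * L) with hS
  have hSb : ∀ m, |S m| ≤ M L := fun m => S_bound hL0 hL1 m
  have h1 : |f (n - 1) • S n| ≤ M L := by
    rw [smul_eq_mul, abs_mul]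
    have hf1 : |f (n - 1)| ≤ 1 := by
      rw [hf, abs_of_nonneg (by positivity)]
      rw [div_le_one (by positivity)]
      linarith [Nat.cast_nonneg (α := ℝ) (n - 1)]
    calc |f (n-1)| * |S n| ≤ 1 * M L := by
          exact mul_le_mul hf1 (hSb n) (abs_nonneg _) one_pos.le
      _ = M L := one_mul _
  have h2 : |∑ i ∈ range (n - 1), (f (i + 1) - f i) • S (i + 1)| ≤ M L := by
    refine (Finset.abs_sum_le_sum_abs _ _).trans ?_
    have hterm : ∀ i ∈ range (n - 1), |(f (i + 1) - f i) • S (i + 1)|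
        ≤ (f i - f (i + 1)) * M L := by
      intro i _
      rw [smul_eq_mul, abs_mul]
      have hmono : f (i + 1) ≤ f i := by
        rw [hf]
        apply one_div_le_one_div_of_le (by positivity)
        push_cast; linarith
      rw [abs_of_nonpos (by linarith), neg_sub]
      exact mul_le_mul_of_nonneg_left (hSb (i + 1)) (by linarith)
    refine (Finset.sum_le_sum hterm).trans ?_
    rw [← Finset.sum_mul]
    have htel : ∑ i ∈ range (n - 1), (f i - f (i + 1)) = f 0 - f (n - 1) :=
      Finset.sum_range_sub' f (n - 1)
    rw [htel]
    have : f 0 - f (n - 1) ≤ 1 := by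
      have : 0 ≤ f (n - 1) := by rw [hf]; positivity
      rw [hf]; simp only [Nat.cast_zero, zero_add, div_one]
      linarith [this]
    exact mul_le_mul_of_nonneg_right this hM.le |>.trans (by linarith)
  calc |f (n - 1) • S n - ∑ i ∈ range (n - 1), (f (i + 1) - f i) • S (i + 1)|
      ≤ |f (n - 1) • S n| + |∑ i ∈ range (n - 1), (f (i + 1) - f i) • S (i + 1)| :=
        abs_sub _ _
    _ ≤ 2 * M L := by linarith

end CBound

section Tsum

lemma summable_g_nat (L : ℝ) (N : ℕ) : Summable (fun n : ℕ => g L N ((n : ℤ) + 1)) := by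
  have h := (summable_int_iff_summable_nat_and_neg.mp (summable_g L N)).1
  exact ((summable_nat_add_iff 1).mpr h).congr (fun n => by push_cast; ring_nf)

lemma summable_g_nat_neg (L : ℝ) (N : ℕ) :
    Summable (fun n : ℕ => g L N (-((n : ℤ) + 1))) := by
  have h := (summable_int_iff_summable_nat_and_neg.mp (summable_g L N)).2
  exact ((summable_nat_add_iff 1).mpr h).congr (fun n => by push_cast; ring_nf)

lemma tsum_int_g (L : ℝ) (N : ℕ) :
    ∑' l : ℤ, g L N l = 2 * ∑' n : ℕ, g L N ((n : ℤ) + 1) := by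
  rw [tsum_of_add_one_of_neg_add_one (summable_g_nat L N) (summable_g_nat_neg L N), g_zero]
  have h2 : ∑' n : ℕ, g L N (-((n : ℤ) + 1)) = ∑' n : ℕ, g L N ((n : ℤ) + 1) :=
    tsum_congr (fun n => g_neg L N _)
  rw [h2]
  ring

end Tsum

section Split

lemma g_succ_of_lt (L : ℝ) {N i : ℕ} (h : i < N) :
    g L N ((i : ℤ) + 1) =
      (1 / (2 * π ^ 2)) * (1 / ((i : ℝ) + 1) - Real.cos (((i : ℝ) + 1) * L) / ((i : ℝ) + 1)) := by
  unfold g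
  have hmin : min |(i : ℤ) + 1| (N : ℤ) = (i : ℤ) + 1 := by
    rw [abs_of_nonneg (by omega)]
    omega
  rw [hmin]
  have h1 : ((i : ℝ) + 1) ≠ 0 := by positivity
  have hπ : (π : ℝ) ≠ 0 := Real.pi_ne_zero
  push_cast
  field_simp

lemma telescope {N : ℕ} (hN : 1 ≤ N) :
    HasSum (fun i : ℕ => (1 : ℝ) / ((N : ℝ) + i) - 1 / ((N : ℝ) + i + 1)) (1 / (N : ℝ)) := by
  have hNpos : (0 : ℝ) < N := by exact_mod_cast hN
  rw [hasSum_iff_tendsto_nat_of_nonneg]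
  · have htel : ∀ n : ℕ, ∑ i ∈ range n, ((1 : ℝ) / ((N : ℝ) + i) - 1 / ((N : ℝ) + i + 1))
        = 1 / (N : ℝ) - 1 / ((N : ℝ) + n) := by
      intro n
      have h := Finset.sum_range_sub' (fun i : ℕ => (1 : ℝ) / ((N : ℝ) + i)) n
      simp only [Nat.cast_add, Nat.cast_one, Nat.cast_zero, add_zero] at h
      rw [← h]
      exact Finset.sum_congr rfl fun i _ => by ring_nf
    simp only [htel]
    have h0 : Tendsto (fun n : ℕ => 1 / ((N : ℝ) + n)) atTop (nhds 0) := by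
      simp only [one_div]
      exact (tendsto_atTop_add_const_left atTop (N : ℝ)
        tendsto_natCast_atTop_atTop).inv_tendsto_atTop
    simpa using tendsto_const_nhds.sub h0
  · intro i
    have h1 : (0 : ℝ) < (N : ℝ) + i := by positivity
    have h2 : (1 : ℝ) / ((N : ℝ) + i + 1) ≤ 1 / ((N : ℝ) + i) :=
      one_div_le_one_div_of_le h1 (by linarith)
    linarith

lemma tail_bound (L : ℝ) {N : ℕ} (hN : 1 ≤ N) :
    ∑' i : ℕ, g L N ((↑(i + N) : ℤ) + 1) ≤ 1 / π ^ 2 := by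
  have hNpos : (0 : ℝ) < N := by exact_mod_cast hN
  have hsum : Summable (fun i : ℕ => g L N ((↑(i + N) : ℤ) + 1)) := by
    exact ((summable_nat_add_iff N).mpr (summable_g_nat L N)).congr (fun i => by push_cast; ring_nf)
  have hle : ∀ i : ℕ, g L N ((↑(i + N) : ℤ) + 1)
      ≤ ((N : ℝ) / π ^ 2) * ((1 : ℝ) / ((N : ℝ) + i) - 1 / ((N : ℝ) + i + 1)) := by
    intro i
    refine (g_le L N _).trans ?_
    have hkey : (1 : ℝ) / ((N : ℝ) + i) - 1 / ((N : ℝ) + i + 1)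
        = 1 / (((N : ℝ) + i) * ((N : ℝ) + i + 1)) := by
      have h1 : (0 : ℝ) < (N : ℝ) + i := by positivity
      field_simp
      ring
    rw [hkey]
    have hcast : (((↑(i + N) : ℤ) + 1 : ℤ) : ℝ) = (N : ℝ) + i + 1 := by push_cast; ring
    rw [hcast]
    apply mul_le_mul_of_nonneg_left _ (by positivity)
    have hip : (0:ℝ) ≤ (i : ℝ) := Nat.cast_nonneg i
    apply one_div_le_one_div_of_le
    · nlinarith
    · nlinarith
  have hrhs : HasSum (fun i : ℕ => ((N : ℝ) / π ^ 2) * ((1 : ℝ) / ((N : ℝ) + i) - 1 / ((N : ℝ) + i + 1)))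
      (((N : ℝ) / π ^ 2) * (1 / (N : ℝ))) := (telescope hN).mul_left _
  have := Summable.tsum_le_tsum hle hsum hrhs.summable
  refine this.trans ?_
  rw [hrhs.tsum_eq]
  exact le_of_eq (by field_simp)

lemma tail_nonneg (L : ℝ) (N : ℕ) : 0 ≤ ∑' i : ℕ, g L N ((↑(i + N) : ℤ) + 1) :=
  tsum_nonneg (fun i => g_nonneg L N _)

lemma P_split (L : ℝ) (N : ℕ) :
    ∑' n : ℕ, g L N ((n : ℤ) + 1)
      = (1 / (2 * π ^ 2)) * ((∑ i ∈ range N, (1 : ℝ) / ((i : ℝ) + 1))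
          - ∑ i ∈ range N, Real.cos (((i : ℝ) + 1) * L) / ((i : ℝ) + 1))
        + ∑' i : ℕ, g L N ((↑(i + N) : ℤ) + 1) := by
  have h := Summable.sum_add_tsum_nat_add (f := fun n : ℕ => g L N ((n : ℤ) + 1)) N (summable_g_nat L N)
  rw [← h]
  congr 1
  rw [mul_sub, Finset.mul_sum, Finset.mul_sum, ← Finset.sum_sub_distrib]
  refine Finset.sum_congr rfl fun i hi => ?_
  show g L N ((i : ℤ) + 1) = _
  rw [g_succ_of_lt L (Finset.mem_range.mp hi), mul_sub]

end Split

section Main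

lemma harmonic_cast (N : ℕ) :
    ((harmonic N : ℚ) : ℝ) = ∑ i ∈ range N, (1 : ℝ) / ((i : ℝ) + 1) := by
  rw [harmonic]
  push_cast
  exact Finset.sum_congr rfl fun i _ => by rw [one_div]

lemma main_real {L : ℝ} (hL0 : 0 < L) (hL1 : L < 2 * π) :
    Tendsto (fun N : ℕ => (1 / Real.log N) * (2 * ∑' n : ℕ, g L N ((n : ℤ) + 1)))
      atTop (nhds (1 / π ^ 2)) := by
  set γ := Real.eulerMascheroniConstant
  set K : ℝ := (1 / π ^ 2) * (|γ| + 1) + (1 / π ^ 2) * (2 * M L) + 2 * (1 / π ^ 2) with hK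
  have hπ : (0 : ℝ) < π ^ 2 := by positivity
  have hlog : Tendsto (fun N : ℕ => Real.log N) atTop atTop :=
    Real.tendsto_log_atTop.comp tendsto_natCast_atTop_atTop
  have hharm : ∀ᶠ N : ℕ in atTop, |((harmonic N : ℚ) : ℝ) - Real.log N| ≤ |γ| + 1 := by
    have h := Real.tendsto_harmonic_sub_log
    filter_upwards [h.eventually (Metric.ball_mem_nhds γ one_pos)] with N hN
    rw [Real.dist_eq] at hN
    have h2 : |((harmonic N : ℚ) : ℝ) - Real.log N - γ + γ|
        ≤ |((harmonic N : ℚ) : ℝ) - Real.log N - γ| + |γ| := abs_add_le _ _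
    simp only [sub_add_cancel] at h2
    linarith
  have hbound : ∀ᶠ N : ℕ in atTop,
      |2 * (∑' n : ℕ, g L N ((n : ℤ) + 1)) - (1 / π ^ 2) * Real.log N| ≤ K := by
    filter_upwards [hharm, eventually_ge_atTop 1] with N hH hN1
    rw [P_split L N]
    have hC := C_bound hL0 hL1 N
    have htail₁ := tail_bound L hN1
    have htail₀ := tail_nonneg L N
    rw [← harmonic_cast N]
    set H := ((harmonic N : ℚ) : ℝ)
    set C := ∑ i ∈ range N, Real.cos (((i : ℝ) + 1) * L) / ((i : ℝ) + 1)
    set T := ∑' i : ℕ, g L N ((↑(i + N) : ℤ) + 1)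
    have hexp : 2 * ((1 / (2 * π ^ 2)) * (H - C) + T) - (1 / π ^ 2) * Real.log N
        = (1 / π ^ 2) * (H - Real.log N) - (1 / π ^ 2) * C + 2 * T := by
      field_simp
      ring
    rw [hexp]
    have h1 : |(1 / π ^ 2) * (H - Real.log N)| ≤ (1 / π ^ 2) * (|γ| + 1) := by
      rw [abs_mul, abs_of_nonneg (by positivity)]
      exact mul_le_mul_of_nonneg_left hH (by positivity)
    have h2 : |(1 / π ^ 2) * C| ≤ (1 / π ^ 2) * (2 * M L) := by
      rw [abs_mul, abs_of_nonneg (by positivity)]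
      exact mul_le_mul_of_nonneg_left hC (by positivity)
    have h3 : |2 * T| ≤ 2 * (1 / π ^ 2) := by
      rw [abs_mul, abs_two, abs_of_nonneg htail₀]
      exact mul_le_mul_of_nonneg_left htail₁ (by norm_num)
    calc |(1 / π ^ 2) * (H - Real.log N) - (1 / π ^ 2) * C + 2 * T|
        ≤ |(1 / π ^ 2) * (H - Real.log N) - (1 / π ^ 2) * C| + |2 * T| := abs_add_le _ _
      _ ≤ |(1 / π ^ 2) * (H - Real.log N)| + |(1 / π ^ 2) * C| + |2 * T| := by
          linarith [abs_sub ((1 / π ^ 2) * (H - Real.log N)) ((1 / π ^ 2) * C)]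
      _ ≤ K := by rw [hK]; linarith
  have hdiff : Tendsto (fun N : ℕ =>
      (1 / Real.log N) * (2 * ∑' n : ℕ, g L N ((n : ℤ) + 1)) - 1 / π ^ 2) atTop (nhds 0) := by
    refine squeeze_zero_norm' (a := fun N : ℕ => K / Real.log N) ?_
      (Tendsto.div_atTop tendsto_const_nhds hlog)
    · filter_upwards [hbound, hlog.eventually_ge_atTop 1] with N hB hlg
      have hlgpos : 0 < Real.log N := lt_of_lt_of_le one_pos hlg
      have heq : (1 / Real.log N) * (2 * ∑' n : ℕ, g L N ((n : ℤ) + 1)) - 1 / π ^ 2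
          = (2 * (∑' n : ℕ, g L N ((n : ℤ) + 1)) - (1 / π ^ 2) * Real.log N) / Real.log N := by
        rw [eq_div_iff hlgpos.ne']
        field_simp
      rw [heq, norm_div, Real.norm_eq_abs, Real.norm_eq_abs, abs_of_pos hlgpos]
      exact div_le_div_of_nonneg_right hB hlgpos.le
  have := hdiff.add_const (1 / π ^ 2)
  simpa using this

end Main

section Final

lemma term_eq (L : ℝ) (F : ℤ → ℂ)
    (hF : ∀ l : ℤ, l ≠ 0 →
      F l = (Complex.exp (Complex.I * l * L) - 1) / (2 * π * Complex.I * l))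
    (l : ℤ) (hl : l ≠ 0) :
    F l * F (-l) = (((1 - Real.cos (l * L)) / (2 * π ^ 2 * (l : ℝ) ^ 2) : ℝ) : ℂ) := by
  have hπ : (π : ℂ) ≠ 0 := by exact_mod_cast Real.pi_ne_zero
  have hlC : (l : ℂ) ≠ 0 := Int.cast_ne_zero.mpr hl
  rw [hF l hl, hF (-l) (neg_ne_zero.mpr hl)]
  set z := Complex.exp (Complex.I * l * L) with hzdef
  set w := Complex.exp (-(Complex.I * l * L)) with hwdef
  have hz : Complex.exp (Complex.I * (-l : ℤ) * L) = w := by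
    rw [hwdef]; push_cast; ring_nf
  have hzw : z * w = 1 := by
    rw [hzdef, hwdef, ← Complex.exp_add]; simp
  have hcos : Complex.cos ((l : ℂ) * L) = (z + w) / 2 := by
    rw [Complex.cos, hzdef, hwdef]
    ring_nf
  have hden : (2*(π:ℂ)*Complex.I*l) * (2*π*Complex.I*(-(l:ℂ))) = 4*π^2*(l:ℂ)^2 := by
    linear_combination (-4*(π:ℂ)^2*(l:ℂ)^2) * Complex.I_sq
  rw [hz]
  push_cast
  rw [hcos, div_mul_div_comm, hden, div_eq_div_iff (by simp [hπ, hlC]) (by simp [hπ, hlC, Real.pi_ne_zero])]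
  linear_combination (2*(π:ℂ)^2*(l:ℂ)^2) * hzw

lemma term_full (L : ℝ) (F : ℤ → ℂ)
    (hF : ∀ l : ℤ, l ≠ 0 →
      F l = (Complex.exp (Complex.I * l * L) - 1) / (2 * π * Complex.I * l))
    (N : ℕ) (l : ℤ) :
    ((min |l| (N : ℤ) : ℤ) : ℂ) * F l * F (-l) = ((g L N l : ℝ) : ℂ) := by
  rcases eq_or_ne l 0 with rfl | hl
  · rw [g_zero]
    rw [show min |(0 : ℤ)| (N : ℤ) = 0 by simp]
    simp
  · have hg : ((g L N l : ℝ) : ℂ)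
        = ((min |l| (N : ℤ) : ℤ) : ℂ)
          * (((1 - Real.cos (l * L)) / (2 * π ^ 2 * (l : ℝ) ^ 2) : ℝ) : ℂ) := by
      unfold g
      rw [mul_div_assoc, Complex.ofReal_mul, Complex.ofReal_intCast]
    rw [hg, mul_assoc, term_eq L F hF l hl]

lemma tsum_key (L : ℝ) (F : ℤ → ℂ)
    (hF : ∀ l : ℤ, l ≠ 0 →
      F l = (Complex.exp (Complex.I * l * L) - 1) / (2 * π * Complex.I * l))
    (N : ℕ) :
    ∑' l : ℤ, ((min |l| (N : ℤ) : ℤ) : ℂ) * F l * F (-l)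
      = ((2 * ∑' n : ℕ, g L N ((n : ℤ) + 1) : ℝ) : ℂ) := by
  rw [tsum_congr (fun l => term_full L F hF N l), ← Complex.ofReal_tsum, tsum_int_g]

end Final

end CueAux

open CueAux in
/-- CUE number variance asymptotics: with `f = χ_{[0,L]}`, whose Fourier
coefficients are `f_l = (e^{ilL} - 1)/(2πil)` (`l ≠ 0`) and `f_0 = L/(2π)`,
one has `(1/log N) ∑_l min(|l|,N) f_l f_{-l} → 1/π²`. -/
theorem cue_number_variance_asymptotics
    (L : ℝ) (hL0 : 0 < L) (hL1 : L < 2 * π)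
    (F : ℤ → ℂ)
    (hF0 : F 0 = (L / (2 * π) : ℝ))
    (hF : ∀ l : ℤ, l ≠ 0 →
      F l = (Complex.exp (Complex.I * l * L) - 1) / (2 * π * Complex.I * l)) :
    Tendsto
      (fun N : ℕ => (1 / Real.log N : ℂ) *
        ∑' l : ℤ, ((min |l| (N : ℤ) : ℤ) : ℂ) * F l * F (-l))
      atTop (nhds ((1 / π ^ 2 : ℝ) : ℂ)) := by
  have hmain := main_real hL0 hL1
  have hcont : Tendsto (fun x : ℝ => (x : ℂ)) (nhds (1 / π ^ 2 : ℝ))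
      (nhds ((1 / π ^ 2 : ℝ) : ℂ)) := Complex.continuous_ofReal.tendsto _
  refine (hcont.comp hmain).congr (fun N => ?_)
  simp only [Function.comp_apply]
  rw [tsum_key L F hF N]
  push_cast
  ring
end

section
/- For real $x, y \in (-1,1)$ with $x \neq y$: $\frac{1-xy}{\sqrt{1-x^2}\sqrt{1-y^2}\,(x-y)^2} = \frac{1}{\sqrt{1-x^2}}\,\frac{\partial^2}{\partial x\,\partial y}\Big(\sqrt{1-y^2}\,\log|x-y|\Big)$, and moreover the same left-hand side equals $-\frac{1}{2}\frac{\partial^2}{\partial x\,\partial y}\log\Big(\frac{1-xy+\sqrt{(1-x^2)(1-y^2)}}{1-xy-\sqrt{(1-x^2)(1-y^2)}}\Big)$. -/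
open Real

lemma one_sub_sq_pos {b : ℝ} (hb : b ∈ Set.Ioo (-1:ℝ) 1) : (0:ℝ) < 1 - b^2 := by
  nlinarith [hb.1, hb.2]

lemma hd_sqrt {b : ℝ} (hb : b ∈ Set.Ioo (-1:ℝ) 1) :
    HasDerivAt (fun t : ℝ => Real.sqrt (1 - t^2)) (-b / Real.sqrt (1 - b^2)) b := by
  have h1 := one_sub_sq_pos hb
  have h := (Real.hasDerivAt_sqrt h1.ne').comp b
    ((hasDerivAt_const b (1:ℝ)).sub (hasDerivAt_pow 2 b))
  refine h.congr_deriv ?_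
  have hs : Real.sqrt (1 - b^2) ≠ 0 := (Real.sqrt_pos.2 h1).ne'
  field_simp
  ring

lemma hd_log_sub {a y : ℝ} (ha : a ≠ y) :
    HasDerivAt (fun b : ℝ => Real.log (a - b)) (-(a - y)⁻¹) y := by
  have hne : a - y ≠ 0 := sub_ne_zero.2 ha
  have h := (Real.hasDerivAt_log hne).comp y ((hasDerivAt_const y a).sub (hasDerivAt_id y))
  refine h.congr_deriv ?_
  ring

lemma inner1 {y : ℝ} (hy : y ∈ Set.Ioo (-1:ℝ) 1) {a : ℝ} (ha : a ≠ y) :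
    deriv (fun b : ℝ => Real.sqrt (1 - b ^ 2) * Real.log |a - b|) y
      = (-y / Real.sqrt (1 - y^2)) * Real.log (a - y)
        - Real.sqrt (1 - y^2) * (a - y)⁻¹ := by
  have heq : (fun b : ℝ => Real.sqrt (1 - b ^ 2) * Real.log |a - b|)
      = fun b : ℝ => Real.sqrt (1 - b ^ 2) * Real.log (a - b) := by
    funext b; rw [Real.log_abs]
  rw [heq]
  have hmul : HasDerivAt (fun b : ℝ => Real.sqrt (1 - b ^ 2) * Real.log (a - b)) _ y :=
    (hd_sqrt hy).mul (hd_log_sub ha)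
  rw [hmul.deriv]
  ring

lemma part1 {x y : ℝ} (hx : x ∈ Set.Ioo (-1:ℝ) 1) (hy : y ∈ Set.Ioo (-1:ℝ) 1) (hxy : x ≠ y) :
    (1 - x * y) / (Real.sqrt (1 - x ^ 2) * Real.sqrt (1 - y ^ 2) * (x - y) ^ 2) =
        (1 / Real.sqrt (1 - x ^ 2)) *
          deriv (fun a : ℝ =>
            deriv (fun b : ℝ => Real.sqrt (1 - b ^ 2) * Real.log |a - b|) y) x := by
  set v := Real.sqrt (1 - y^2) with hv
  have hvpos : 0 < v := Real.sqrt_pos.2 (one_sub_sq_pos hy)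
  have hupos : 0 < Real.sqrt (1 - x^2) := Real.sqrt_pos.2 (one_sub_sq_pos hx)
  have hv2 : v^2 = 1 - y^2 := Real.sq_sqrt (one_sub_sq_pos hy).le
  have hne : x - y ≠ 0 := sub_ne_zero.2 hxy
  have hev : (fun a : ℝ => deriv (fun b : ℝ => Real.sqrt (1 - b ^ 2) * Real.log |a - b|) y)
      =ᶠ[nhds x] fun a : ℝ => (-y / v) * Real.log (a - y) - v * (a - y)⁻¹ := by
    filter_upwards [isOpen_compl_singleton.mem_nhds hxy] with a ha
    exact inner1 hy ha
  rw [hev.deriv_eq]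
  have hlog : HasDerivAt (fun a : ℝ => Real.log (a - y)) (x - y)⁻¹ x := by
    have h := (Real.hasDerivAt_log hne).comp x ((hasDerivAt_id x).sub_const y)
    refine h.congr_deriv ?_
    ring
  have hinv : HasDerivAt (fun a : ℝ => (a - y)⁻¹) (-(1 / (x - y)^2)) x := by
    have h := ((hasDerivAt_id x).sub_const y).inv hne
    simp only [id_eq] at h
    refine h.congr_deriv ?_
    ring
  have hder : HasDerivAt (fun a : ℝ => (-y / v) * Real.log (a - y) - v * (a - y)⁻¹) _ x :=
    (hlog.const_mul (-y / v)).sub (hinv.const_mul v)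
  rw [hder.deriv]
  have key : (1 - x*y)/(v*(x-y)^2) = -y / v * (x - y)⁻¹ - v * -(1 / (x - y) ^ 2) := by
    field_simp
    linear_combination (-1) * hv2
  rw [← key, one_div, inv_mul_eq_div, div_div]
  ring_nf

lemma log_rewrite {a b : ℝ} (ha : a ∈ Set.Ioo (-1:ℝ) 1) (hb : b ∈ Set.Ioo (-1:ℝ) 1)
    (hab : a ≠ b) :
    Real.log ((1 - a * b + Real.sqrt ((1 - a ^ 2) * (1 - b ^ 2))) /
        (1 - a * b - Real.sqrt ((1 - a ^ 2) * (1 - b ^ 2))))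
      = 2 * Real.log (1 - a * b + Real.sqrt (1 - a^2) * Real.sqrt (1 - b^2))
        - 2 * Real.log (a - b) := by
  have ha2 := one_sub_sq_pos ha
  have hb2 := one_sub_sq_pos hb
  have hS : Real.sqrt ((1 - a ^ 2) * (1 - b ^ 2))
      = Real.sqrt (1 - a^2) * Real.sqrt (1 - b^2) := Real.sqrt_mul ha2.le _
  set u := Real.sqrt (1 - a^2) with hu
  set v := Real.sqrt (1 - b^2) with hv
  have hu2 : u^2 = 1 - a^2 := Real.sq_sqrt ha2.le
  have hv2 : v^2 = 1 - b^2 := Real.sq_sqrt hb2.le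
  have hone : 0 < 1 - a * b := by nlinarith [ha.1, ha.2, hb.1, hb.2]
  have hN : 0 < 1 - a * b + u * v := by positivity
  have habne : a - b ≠ 0 := sub_ne_zero.2 hab
  have hND : (1 - a * b + u * v) * (1 - a * b - u * v) = (a - b)^2 := by
    nlinarith [hu2, hv2]
  have hD : 0 < 1 - a * b - u * v := by
    nlinarith [hND, hN, pow_pos (abs_pos.2 habne) 2, sq_abs (a-b)]
  rw [hS, Real.log_div hN.ne' hD.ne']
  have hDval : 1 - a * b - u * v = (a - b)^2 / (1 - a * b + u * v) := by
    field_simp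
    linear_combination hND
  rw [hDval, Real.log_div (pow_ne_zero 2 habne) hN.ne', Real.log_pow]
  push_cast
  ring

lemma hd_sqrt' {b : ℝ} (hb : b ∈ Set.Ioo (-1:ℝ) 1) :
    HasDerivAt (fun t : ℝ => Real.sqrt (1 - t^2)) (-b / Real.sqrt (1 - b^2)) b := by
  have h1 := one_sub_sq_pos hb
  have h := (Real.hasDerivAt_sqrt h1.ne').comp b
    ((hasDerivAt_const b (1:ℝ)).sub (hasDerivAt_pow 2 b))
  refine h.congr_deriv ?_
  have hs : Real.sqrt (1 - b^2) ≠ 0 := (Real.sqrt_pos.2 h1).ne'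
  field_simp
  ring

lemma hd_log_sub' {a y : ℝ} (ha : a ≠ y) :
    HasDerivAt (fun b : ℝ => Real.log (a - b)) (-(a - y)⁻¹) y := by
  have hne : a - y ≠ 0 := sub_ne_zero.2 ha
  have h := (Real.hasDerivAt_log hne).comp y ((hasDerivAt_const y a).sub (hasDerivAt_id y))
  refine h.congr_deriv ?_
  ring

lemma inner2 {y : ℝ} (hy : y ∈ Set.Ioo (-1:ℝ) 1) {a : ℝ} (ha : a ∈ Set.Ioo (-1:ℝ) 1)
    (hay : a ≠ y) :
    deriv (fun b : ℝ =>
        Real.log ((1 - a * b + Real.sqrt ((1 - a ^ 2) * (1 - b ^ 2))) /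
          (1 - a * b - Real.sqrt ((1 - a ^ 2) * (1 - b ^ 2))))) y
      = 2 * Real.sqrt (1 - a^2) / (Real.sqrt (1 - y^2) * (a - y)) := by
  set u := Real.sqrt (1 - a^2) with hu
  set v := Real.sqrt (1 - y^2) with hv
  have ha2 := one_sub_sq_pos ha
  have hy2 := one_sub_sq_pos hy
  have hupos : 0 < u := Real.sqrt_pos.2 ha2
  have hvpos : 0 < v := Real.sqrt_pos.2 hy2
  have hu2 : u^2 = 1 - a^2 := Real.sq_sqrt ha2.le
  have hv2 : v^2 = 1 - y^2 := Real.sq_sqrt hy2.le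
  have hone : 0 < 1 - a * y := by nlinarith [ha.1, ha.2, hy.1, hy.2]
  have hN : 0 < 1 - a * y + u * v := by positivity
  have hayne : a - y ≠ 0 := sub_ne_zero.2 hay
  -- rewrite on a neighborhood of y
  have hopen : IsOpen (Set.Ioo (-1:ℝ) 1 ∩ {b : ℝ | b ≠ a}) :=
    isOpen_Ioo.inter isOpen_compl_singleton
  have hev : (fun b : ℝ =>
        Real.log ((1 - a * b + Real.sqrt ((1 - a ^ 2) * (1 - b ^ 2))) /
          (1 - a * b - Real.sqrt ((1 - a ^ 2) * (1 - b ^ 2)))))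
      =ᶠ[nhds y] fun b : ℝ =>
        2 * Real.log (1 - a * b + u * Real.sqrt (1 - b^2)) - 2 * Real.log (a - b) := by
    filter_upwards [hopen.mem_nhds ⟨hy, fun h => hay h.symm⟩] with b hb
    exact log_rewrite ha hb.1 (fun h => hb.2 h.symm)
  rw [hev.deriv_eq]
  have h1 : HasDerivAt (fun b : ℝ => 1 - a * b + u * Real.sqrt (1 - b^2))
      (-a + u * (-y / v)) y := by
    have h := ((hasDerivAt_const y (1:ℝ)).sub ((hasDerivAt_id y).const_mul a)).add
      ((hd_sqrt' hy).const_mul u)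
    simp only [id_eq] at h
    refine h.congr_deriv ?_
    rw [← hv]
    ring
  have hlog1 := h1.log hN.ne'
  have hder : HasDerivAt (fun b : ℝ =>
      2 * Real.log (1 - a * b + u * Real.sqrt (1 - b^2)) - 2 * Real.log (a - b)) _ y :=
    (hlog1.const_mul (2:ℝ)).sub ((hd_log_sub' hay).const_mul (2:ℝ))
  rw [hder.deriv]
  have hND : (1 - a * y + u * v) * (1 - a * y - u * v) = (a - y)^2 := by
    nlinarith [hu2, hv2]
  field_simp
  rw [← hv]
  linear_combination u * hv2 - v * hu2

lemma part2 {x y : ℝ} (hx : x ∈ Set.Ioo (-1:ℝ) 1) (hy : y ∈ Set.Ioo (-1:ℝ) 1) (hxy : x ≠ y) :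
    (1 - x * y) / (Real.sqrt (1 - x ^ 2) * Real.sqrt (1 - y ^ 2) * (x - y) ^ 2) =
        -(1 / 2) *
          deriv (fun a : ℝ =>
            deriv (fun b : ℝ =>
              Real.log ((1 - a * b + Real.sqrt ((1 - a ^ 2) * (1 - b ^ 2))) /
                (1 - a * b - Real.sqrt ((1 - a ^ 2) * (1 - b ^ 2))))) y) x := by
  set u := Real.sqrt (1 - x^2) with hu
  set v := Real.sqrt (1 - y^2) with hv
  have hx2 := one_sub_sq_pos hx
  have hy2 := one_sub_sq_pos hy
  have hupos : 0 < u := Real.sqrt_pos.2 hx2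
  have hvpos : 0 < v := Real.sqrt_pos.2 hy2
  have hu2 : u^2 = 1 - x^2 := Real.sq_sqrt hx2.le
  have hv2 : v^2 = 1 - y^2 := Real.sq_sqrt hy2.le
  have hne : x - y ≠ 0 := sub_ne_zero.2 hxy
  have hopen : IsOpen (Set.Ioo (-1:ℝ) 1 ∩ {a : ℝ | a ≠ y}) :=
    isOpen_Ioo.inter isOpen_compl_singleton
  have hev : (fun a : ℝ =>
        deriv (fun b : ℝ =>
          Real.log ((1 - a * b + Real.sqrt ((1 - a ^ 2) * (1 - b ^ 2))) /
            (1 - a * b - Real.sqrt ((1 - a ^ 2) * (1 - b ^ 2))))) y)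
      =ᶠ[nhds x] fun a : ℝ => (2 / v) * (Real.sqrt (1 - a^2) * (a - y)⁻¹) := by
    filter_upwards [hopen.mem_nhds ⟨hx, hxy⟩] with a haa
    rw [inner2 hy haa.1 haa.2]
    rw [div_eq_mul_inv, mul_inv]
    ring
  rw [hev.deriv_eq]
  have hinv : HasDerivAt (fun a : ℝ => (a - y)⁻¹) (-(1 / (x - y)^2)) x := by
    have h := ((hasDerivAt_id x).sub_const y).inv hne
    simp only [id_eq] at h
    refine h.congr_deriv ?_
    ring
  have hder : HasDerivAt (fun a : ℝ => (2 / v) * (Real.sqrt (1 - a^2) * (a - y)⁻¹)) _ x :=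
    ((hd_sqrt' hx).mul hinv).const_mul (2 / v)
  rw [hder.deriv]
  field_simp
  rw [← hu]
  linear_combination (-u) * hu2

/-- Two kernel representations of the smoothed limiting truncated two-point
correlation of the Gaussian β-ensemble, for `x, y ∈ (-1,1)`, `x ≠ y`. -/
theorem gaussian_beta_kernel_identities (x y : ℝ)
    (hx : x ∈ Set.Ioo (-1 : ℝ) 1) (hy : y ∈ Set.Ioo (-1 : ℝ) 1) (hxy : x ≠ y) :
    (1 - x * y) / (Real.sqrt (1 - x ^ 2) * Real.sqrt (1 - y ^ 2) * (x - y) ^ 2) =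
        (1 / Real.sqrt (1 - x ^ 2)) *
          deriv (fun a : ℝ =>
            deriv (fun b : ℝ => Real.sqrt (1 - b ^ 2) * Real.log |a - b|) y) x ∧
      (1 - x * y) / (Real.sqrt (1 - x ^ 2) * Real.sqrt (1 - y ^ 2) * (x - y) ^ 2) =
        -(1 / 2) *
          deriv (fun a : ℝ =>
            deriv (fun b : ℝ =>
              Real.log ((1 - a * b + Real.sqrt ((1 - a ^ 2) * (1 - b ^ 2))) /
                (1 - a * b - Real.sqrt ((1 - a ^ 2) * (1 - b ^ 2))))) y) x := by
  exact ⟨part1 hx hy hxy, part2 hx hy hxy⟩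
end

section
/- For every positive integer $l$, $\sum_{k=1}^{l} k\binom{3l}{2l+k}\binom{3l}{2l-k} = \frac{l}{3}\binom{3l}{l}^2$. -/
/-!
Write `n = a + m` and `f k = C(n, a + k) C(n, m + k)`, so that the identity is the case `a = 2l`,
`m = l` (by symmetry `C(3l, 2l - k) = C(3l, l + k)`). The summand `k f k` telescopes against the
potential `P k = (a + k)(m + k) f k`: the ratio rule `(j + 1) C(n, j + 1) = (n - j) C(n, j)` gives
`P (k + 1) = (a - k)(m - k) f k`, and `(a + k)(m + k) - (a - k)(m - k) = 2nk`, hence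
`P k - P (k + 1) = 2n k f k`. Summing over `1 ≤ k ≤ m` leaves `P 1 - P (m + 1) = P 0 = a m C(n, a)²`.
-/

open Finset

def chooseMulChoosePotential (a m k : ℕ) : ℕ :=
  (a + k) * (m + k) * (a + m).choose (a + k) * (a + m).choose (m + k)

lemma succ_mul_choose_add_succ (a m k : ℕ) :
    (a + k + 1) * (a + m).choose (a + k + 1) = (m - k) * (a + m).choose (a + k) := by
  have h := Nat.choose_succ_right_eq (a + m) (a + k)
  rw [show a + m - (a + k) = m - k by omega] at h
  rw [mul_comm, h, mul_comm]

lemma chooseMulChoosePotential_succ (a m k : ℕ) :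
    chooseMulChoosePotential a m (k + 1) =
      (a - k) * (m - k) * (a + m).choose (a + k) * (a + m).choose (m + k) := by
  have ha := succ_mul_choose_add_succ a m k
  have hm := succ_mul_choose_add_succ m a k
  rw [add_comm m a] at hm
  calc chooseMulChoosePotential a m (k + 1)
      = ((a + k + 1) * (a + m).choose (a + k + 1)) *
          ((m + k + 1) * (a + m).choose (m + k + 1)) := by
        simp only [chooseMulChoosePotential, ← add_assoc]; ring
    _ = _ := by rw [ha, hm]; ring

lemma chooseMulChoosePotential_eq_succ_add (a m k : ℕ) :
    chooseMulChoosePotential a m k = chooseMulChoosePotential a m (k + 1) +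
      2 * (a + m) * k * (a + m).choose (a + k) * (a + m).choose (m + k) := by
  rw [chooseMulChoosePotential_succ, chooseMulChoosePotential]
  by_cases hk : k ≤ a ∧ k ≤ m
  · have hpoly : (a + k) * (m + k) = (a - k) * (m - k) + 2 * (a + m) * k := by
      obtain ⟨ha, hm⟩ := hk
      zify [ha, hm]
      ring
    rw [hpoly]
    ring
  · -- outside `k ≤ min a m` one of the two binomials vanishes
    have hzero : (a + m).choose (a + k) * (a + m).choose (m + k) = 0 := by
      rcases not_and_or.mp hk with ha | hm
      · rw [Nat.choose_eq_zero_of_lt (n := a + m) (k := m + k) (by omega), mul_zero]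
      · rw [Nat.choose_eq_zero_of_lt (n := a + m) (k := a + k) (by omega), zero_mul]
    simp only [mul_assoc, hzero, mul_zero, add_zero]

lemma two_mul_sum_add_chooseMulChoosePotential (a m K : ℕ) :
    2 * (a + m) * ∑ k ∈ Icc 1 K, k * (a + m).choose (a + k) * (a + m).choose (m + k) +
      chooseMulChoosePotential a m (K + 1) = chooseMulChoosePotential a m 0 := by
  induction K with
  | zero => simpa using (chooseMulChoosePotential_eq_succ_add a m 0).symm
  | succ K ih =>
    rw [sum_Icc_succ_top (by omega), ← ih, chooseMulChoosePotential_eq_succ_add a m (K + 1)]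
    ring

theorem two_mul_add_mul_sum_mul_choose_mul_choose (a m : ℕ) :
    2 * (a + m) * ∑ k ∈ Icc 1 m, k * (a + m).choose (a + k) * (a + m).choose (m + k) =
      a * m * (a + m).choose a ^ 2 := by
  have htop : chooseMulChoosePotential a m (m + 1) = 0 := by
    simp [chooseMulChoosePotential, ← add_assoc]
  have h := two_mul_sum_add_chooseMulChoosePotential a m m
  rw [htop, add_zero] at h
  rw [h, chooseMulChoosePotential, add_zero, add_zero, ← Nat.choose_symm_add]
  ring

theorem ginibre_product_binomial_identity_general (l : ℕ) :
    ∑ k ∈ Finset.Icc 1 l,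
        (k : ℚ) * (Nat.choose (3 * l) (2 * l + k)) * (Nat.choose (3 * l) (2 * l - k)) =
      (l : ℚ) / 3 * (Nat.choose (3 * l) l) ^ 2 := by
  rcases Nat.eq_zero_or_pos l with rfl | hl
  · simp
  have hsymm : ∀ k ∈ Icc 1 l, (3 * l).choose (2 * l - k) = (3 * l).choose (l + k) :=
    fun k hk => Nat.choose_symm_of_eq_add (by simp only [mem_Icc] at hk; omega)
  have hcentral : (3 * l).choose (2 * l) = (3 * l).choose l := Nat.choose_symm_of_eq_add (by ring)
  have key := two_mul_add_mul_sum_mul_choose_mul_choose (2 * l) l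
  rw [show 2 * l + l = 3 * l by ring, hcentral] at key
  have keyℚ := congrArg (Nat.cast : ℕ → ℚ) key
  push_cast at keyℚ
  rw [sum_congr rfl fun k hk => by rw [hsymm k hk]]
  have hlℚ : (0 : ℚ) < l := by exact_mod_cast hl
  field_simp
  nlinarith [keyℚ]

/-- Binomial identity for the covariance of singular values of a product of two
complex Ginibre matrices: `∑_{k=1}^l k C(3l, 2l+k) C(3l, 2l-k) = (l/3) C(3l, l)²`. -/
theorem ginibre_product_binomial_identity (l : ℕ) (hl : 0 < l) :
    ∑ k ∈ Finset.Icc 1 l,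
        (k : ℚ) * (Nat.choose (3 * l) (2 * l + k)) * (Nat.choose (3 * l) (2 * l - k)) =
      (l : ℚ) / 3 * (Nat.choose (3 * l) l) ^ 2 :=
  ginibre_product_binomial_identity_general l
end
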